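/- arXiv:1803.10920 — 2 statements merged into one kernel-verified Lean document; each statement's English description precedes it below -/
import Mathlib

section
/- Let G(t) ∈ ℤ⟦t⟧ be the power series whose coefficient of t^n is the number of lists of n integers, each belonging to {−2, −1, 0, 1, 2}, whose total sum is 0. Then (5t + 4)(5t − 1)²(t − 1)²G⁴ + 2(t − 1)(5t − 2)(5t − 1)G² + t = 0 in ℤ⟦t⟧. -/
open PowerSeries

/-- The generating function for bridges with step set `{-2, -1, 0, 1, 2}`: the
coefficient of `t^n` is the number of lists of `n` integers from that set with
total sum `0`. -/
noncomputable def bridgeGF : PowerSeries ℤ :=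
  PowerSeries.mk fun n =>
    (Nat.card {l : List ℤ //
      l.length = n ∧
      (∀ x ∈ l, x ∈ ({-2, -1, 0, 1, 2} : Set ℤ)) ∧
      l.sum = 0} : ℤ)

/-!
Shifting every step by `2`, the coefficients of `G = bridgeGF` are the central coefficients
`[Y^{2n}] (1 + Y + Y² + Y³ + Y⁴)ⁿ`. A creative-telescoping certificate turns this into a
linear recurrence of order four, i.e. a linear differential equation of order two for `G`.

Put `W = (5X + 4)(5X - 1)(X - 1) G² + 5X - 2`. The defect `(1 - X)(1 - 5X) W' - (5X - 3) W` is
quadratic in `G, G'`; the equation of `G` forces it to satisfy an equation of order two whose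
indicial values at `0` are nonzero, and it vanishes at `0`, so it is zero. Then
`W² - 4(1 - X)(1 - 5X)` satisfies a first-order equation and vanishes at `0`, so `W` is
`2 √((1 - X)(1 - 5X))`, and expanding `W² = 4(1 - X)(1 - 5X)` gives `5X + 4` times the claim.
-/

namespace Polynomial

theorem coeff_pow_sum_X_pow {R α : Type*} [CommSemiring R] [DecidableEq α]
    (S : Finset α) (e : α → ℕ) (n m : ℕ) :
    ((∑ a ∈ S, (X : R[X]) ^ e a) ^ n).coeff m =
      {g ∈ Fintype.piFinset fun _ : Fin n => S | ∑ i, e (g i) = m}.card := by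
  rw [← Fin.prod_const, Finset.prod_univ_sum, finsetSum_coeff, ← Finset.sum_boole]
  refine Finset.sum_congr rfl fun g _ => ?_
  rw [Finset.prod_pow_eq_pow_sum, coeff_X_pow]
  exact if_congr eq_comm rfl rfl

theorem coeff_X_mul_derivative {R : Type*} [CommSemiring R] (f : R[X]) (n : ℕ) :
    (X * derivative f).coeff n = n * f.coeff n := by
  cases n with
  | zero => simp
  | succ n => rw [coeff_X_mul, coeff_derivative, mul_comm]; push_cast; rfl

end Polynomial

theorem List.natCard_length_forall_mem_sum_eq_natCard_fin {β : Type*} [AddCommMonoid β]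
    (S : Set β) (n : ℕ) (k : β) :
    Nat.card {l : List β // l.length = n ∧ (∀ x ∈ l, x ∈ S) ∧ l.sum = k} =
      Nat.card {g : Fin n → β // (∀ i, g i ∈ S) ∧ ∑ i, g i = k} := by
  refine Nat.card_congr (Equiv.symm ?_)
  refine (Equiv.subtypeEquiv (Equiv.vectorEquivFin β n).symm fun g => ?_).trans
    (Equiv.subtypeSubtypeEquivSubtypeInter (fun l : List β => l.length = n)
      fun l => (∀ x ∈ l, x ∈ S) ∧ l.sum = k)
  rw [show ((Equiv.vectorEquivFin β n).symm g).1 = List.ofFn g from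
    List.Vector.toList_ofFn g, List.forall_mem_ofFn_iff, List.sum_ofFn]

namespace PowerSeries

variable {R : Type*}

theorem coeff_ofNat_mul [Semiring R] (a : ℕ) [a.AtLeastTwo] (f : R⟦X⟧) (n : ℕ) :
    coeff n ((no_index (OfNat.ofNat a) : R⟦X⟧) * f) = OfNat.ofNat a * coeff n f := by
  rw [← map_ofNat C, coeff_C_mul]

theorem coeff_mul_of_forall_coeff_eq_zero [Semiring R] {f g : R⟦X⟧} {n : ℕ}
    (hg : ∀ j < n, coeff j g = 0) : coeff n (f * g) = constantCoeff f * coeff n g := by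
  rw [coeff_mul, Finset.sum_eq_single (0, n)]
  · simp
  · rintro ⟨i, j⟩ hij hne
    replace hij : i + j = n := by simpa using hij
    have hi : i ≠ 0 := by rintro rfl; exact hne (by simp_all)
    rw [hg j (by omega), mul_zero]
  · simp

theorem derivative_ofNat [CommSemiring R] (a : ℕ) [a.AtLeastTwo] :
    d⁄dX R (no_index (OfNat.ofNat a) : R⟦X⟧) = 0 := by
  rw [← map_ofNat C, derivative_C]

theorem coeff_X_mul_derivative [CommSemiring R] (f : R⟦X⟧) (n : ℕ) :
    coeff n (X * d⁄dX R f) = n * coeff n f := by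
  cases n with
  | zero => simp
  | succ n => rw [coeff_succ_X_mul, coeff_derivative, mul_comm]; push_cast; rfl

/-- The `X ^ n` coefficient of the equation is `(n + 1) (A₀ n + B₀) fₙ₊₁` plus terms in
`f₀, …, fₙ`, so the coefficients of `f` vanish one after the other. -/
theorem eq_zero_of_ode_of_constantCoeff_eq_zero [CommRing R] [IsDomain R] [CharZero R]
    {A B C f : R⟦X⟧} (hode : A * (X * d⁄dX R (d⁄dX R f)) + B * d⁄dX R f + C * f = 0)
    (hAB : ∀ m : ℕ, constantCoeff A * m + constantCoeff B ≠ 0) (hf : constantCoeff f = 0) :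
    f = 0 := by
  suffices h : ∀ n, ∀ j ≤ n, coeff j f = 0 from ext fun n => by simpa using h n n le_rfl
  intro n
  induction n with
  | zero => simpa using hf
  | succ n ih =>
    intro j hj
    obtain hj | rfl := Nat.lt_or_eq_of_le hj
    · exact ih j (by omega)
    have hD : ∀ j < n, coeff j (d⁄dX R f) = 0 := fun j hj => by
      rw [coeff_derivative, ih (j + 1) hj, zero_mul]
    have hXDD : ∀ j < n, coeff j (X * d⁄dX R (d⁄dX R f)) = 0 := fun j hj => by
      rw [coeff_X_mul_derivative, hD j hj, mul_zero]
    have h := congrArg (coeff n) hode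
    rw [map_add, map_add, coeff_mul_of_forall_coeff_eq_zero hXDD,
      coeff_mul_of_forall_coeff_eq_zero hD,
      coeff_mul_of_forall_coeff_eq_zero fun j hj => ih j hj.le, ih n le_rfl,
      coeff_X_mul_derivative, coeff_derivative, map_zero] at h
    have h' : ((n + 1 : R) * (constantCoeff A * n + constantCoeff B)) * coeff (n + 1) f = 0 := by
      linear_combination h
    simpa [hAB n, Nat.cast_add_one_ne_zero] using h'

end PowerSeries

namespace Polynomial

noncomputable def pentanomial : ℤ[X] := 1 + X + X ^ 2 + X ^ 3 + X ^ 4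

noncomputable def telescoper (k : ℕ) : ℤ[X] :=
  (2 * (k : ℤ[X]) + 7) * (X ^ 12 - 1) + (7 * (k : ℤ[X]) + 25) * (X ^ 11 - X)
    + (17 * (k : ℤ[X]) + 38) * (X ^ 10 - X ^ 2) + (34 * (k : ℤ[X]) + 70) * (X ^ 9 - X ^ 3)
    + (9 * (k : ℤ[X]) + 20) * (X ^ 8 - X ^ 4) + (15 * (k : ℤ[X]) + 31) * (X ^ 7 - X ^ 5)

/-- By `coeff_X_mul_derivative` the left side has no `X ^ (2k + 8)` term, while on the right
that coefficient is a combination of central coefficients of consecutive powers. -/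
theorem pentanomial_pow_telescoping (k : ℕ) :
    X * derivative (telescoper k * pentanomial ^ (k + 1))
        - C (2 * (k : ℤ) + 8) * (telescoper k * pentanomial ^ (k + 1)) =
      C (125 * ((k : ℤ) + 1) * (k + 2)) * (X ^ 8 * pentanomial ^ k)
        - C (25 * ((k : ℤ) + 2) * (k - 1)) * (X ^ 6 * pentanomial ^ (k + 1))
        - C (105 * (k : ℤ) ^ 2 + 445 * k + 480) * (X ^ 4 * pentanomial ^ (k + 2))
        + C ((k : ℤ) ^ 2 - 43 * k - 140) * (X ^ 2 * pentanomial ^ (k + 3))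
        + C (2 * ((k : ℤ) + 4) * (2 * k + 7)) * (X ^ 0 * pentanomial ^ (k + 4)) := by
  rw [derivative_mul, derivative_pow, Nat.add_sub_cancel]
  simp only [telescoper, pentanomial, derivative_mul, derivative_X_pow, derivative_X,
    derivative_one, derivative_natCast, derivative_ofNat, map_add, map_mul, map_sub, map_pow,
    map_natCast, map_ofNat, map_one, Nat.cast_ofNat, Nat.cast_add, Nat.cast_one, Nat.reduceSub]
  ring

end Polynomial

noncomputable def centralPentanomial (n : ℕ) : ℤ :=
  (Polynomial.pentanomial ^ n).coeff (2 * n)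

theorem coeff_bridgeGF (n : ℕ) : coeff n bridgeGF = centralPentanomial n := by
  have hsteps : Polynomial.pentanomial =
      ∑ s ∈ Finset.Icc (-2 : ℤ) 2, Polynomial.X ^ (s + 2).toNat := by
    rw [show Finset.Icc (-2 : ℤ) 2 = {-2, -1, 0, 1, 2} from rfl]
    simp [Polynomial.pentanomial, Finset.sum_insert, add_assoc]
  rw [centralPentanomial, hsteps, Polynomial.coeff_pow_sum_X_pow, bridgeGF, coeff_mk,
    List.natCard_length_forall_mem_sum_eq_natCard_fin, ← Nat.card_eq_finsetCard]
  congr 1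
  refine Nat.card_congr (Equiv.subtypeEquivRight fun g => ?_)
  simp only [Finset.mem_filter, Fintype.mem_piFinset, Finset.mem_Icc, Set.mem_insert_iff,
    Set.mem_singleton_iff]
  have hmem : (∀ i, -2 ≤ g i ∧ g i ≤ 2) ↔
      ∀ i, g i = -2 ∨ g i = -1 ∨ g i = 0 ∨ g i = 1 ∨ g i = 2 :=
    forall_congr' fun i => by omega
  rw [hmem, and_congr_right_iff]
  intro hg
  have hshift : ((∑ i, (g i + 2).toNat : ℕ) : ℤ) = ∑ i, g i + 2 * n := by
    rw [Nat.cast_sum,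
      Finset.sum_congr rfl fun i _ => Int.toNat_of_nonneg (by grind : 0 ≤ g i + 2)]
    simp [Finset.sum_add_distrib, mul_comm]
  omega

theorem centralPentanomial_recurrence (k : ℕ) :
    125 * ((k : ℤ) + 1) * (k + 2) * centralPentanomial k
      - 25 * ((k : ℤ) + 2) * (k - 1) * centralPentanomial (k + 1)
      - (105 * (k : ℤ) ^ 2 + 445 * k + 480) * centralPentanomial (k + 2)
      + ((k : ℤ) ^ 2 - 43 * k - 140) * centralPentanomial (k + 3)
      + 2 * ((k : ℤ) + 4) * (2 * k + 7) * centralPentanomial (k + 4) = 0 := by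
  have h := congrArg (Polynomial.coeff · (2 * k + 8)) (Polynomial.pentanomial_pow_telescoping k)
  have hshift (m j n : ℕ) (hn : n = 2 * m + j) :
      (Polynomial.X ^ j * Polynomial.pentanomial ^ m).coeff n = centralPentanomial m := by
    rw [hn, Polynomial.coeff_X_pow_mul]; rfl
  simp only [Polynomial.coeff_add, Polynomial.coeff_sub, Polynomial.coeff_C_mul,
    Polynomial.coeff_X_mul_derivative] at h
  rw [hshift k 8 _ rfl, hshift (k + 1) 6 _ (by ring), hshift (k + 2) 4 _ (by ring),
    hshift (k + 3) 2 _ (by ring), hshift (k + 4) 0 _ (by ring)] at h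
  push_cast at h
  linear_combination -h

theorem centralPentanomial_initial_values :
    centralPentanomial 0 = 1 ∧ centralPentanomial 1 = 1 ∧ centralPentanomial 2 = 5 ∧
      centralPentanomial 3 = 19 := by
  refine ⟨?_, ?_, ?_, ?_⟩ <;>
  · rw [centralPentanomial, Polynomial.pentanomial]
    ring_nf
    simp [Polynomial.coeff_X, Polynomial.coeff_one]

theorem constantCoeff_bridgeGF : constantCoeff bridgeGF = 1 := by
  rw [← coeff_zero_eq_constantCoeff_apply, coeff_bridgeGF, centralPentanomial_initial_values.1]

theorem bridgeGF_ode :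
    X * (4 + X - 105 * X ^ 2 - 25 * X ^ 3 + 125 * X ^ 4) * d⁄dX ℤ (d⁄dX ℤ bridgeGF)
      + (2 - 48 * X - 130 * X ^ 2 + 500 * X ^ 4) * d⁄dX ℤ bridgeGF
      + (-2 - 10 * X + 50 * X ^ 2 + 250 * X ^ 3) * bridgeGF = 0 := by
  set G := bridgeGF
  set θG := X * d⁄dX ℤ G
  have hθθG : X * d⁄dX ℤ θG = θG + X ^ 2 * d⁄dX ℤ (d⁄dX ℤ G) := by
    simp only [θG, Derivation.leibniz, derivative_X, smul_eq_mul]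
    ring
  -- `X` times the equation, written with `θ = X d/dX`: its `X ^ (k + 4)` coefficient is the
  -- recurrence at `k`.
  suffices h : (4 + X - 105 * X ^ 2 - 25 * X ^ 3 + 125 * X ^ 4) * (X * d⁄dX ℤ θG)
      + (-2 - 49 * X - 25 * X ^ 2 + 25 * X ^ 3 + 375 * X ^ 4) * θG
      + (-2 * X - 10 * X ^ 2 + 50 * X ^ 3 + 250 * X ^ 4) * G = 0 by
    refine (mul_eq_zero.mp ?_).resolve_left X_ne_zero
    linear_combination h - (4 + X - 105 * X ^ 2 - 25 * X ^ 3 + 125 * X ^ 4) * hθθG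
  have hG (m : ℕ) : coeff m G = centralPentanomial m := coeff_bridgeGF m
  have hθ (m : ℕ) : coeff m θG = m * centralPentanomial m := by
    rw [coeff_X_mul_derivative, hG]
  have hθθ (m : ℕ) : coeff m (X * d⁄dX ℤ θG) = m * (m * centralPentanomial m) := by
    rw [coeff_X_mul_derivative, hθ]
  obtain ⟨h0, h1, h2, h3⟩ := centralPentanomial_initial_values
  ext n
  simp only [add_mul, sub_mul, mul_assoc, map_add, map_sub, map_neg, neg_mul, map_zero,
    coeff_ofNat_mul, coeff_X_pow_mul', hG, hθ, hθθ]
  match n with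
  | 0 | 1 | 2 | 3 => norm_num [coeff_succ_X_mul, hG, hθ, hθθ, h0, h1, h2, h3]
  | k + 4 =>
    simp only [show k + 4 - 2 = k + 2 from rfl, show k + 4 - 3 = k + 1 from rfl,
      show k + 4 - 4 = k from rfl, Nat.cast_add, Nat.cast_ofNat, Nat.cast_one, coeff_succ_X_mul,
      hθθ, hθ, hG, le_add_iff_nonneg_left, zero_le, ↓reduceIte]
    linear_combination centralPentanomial_recurrence k

noncomputable def bridgeW : ℤ⟦X⟧ :=
  (5 * X + 4) * (5 * X - 1) * (X - 1) * bridgeGF ^ 2 + 5 * X - 2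

theorem bridgeW_ode : (1 - X) * (1 - 5 * X) * d⁄dX ℤ bridgeW = (5 * X - 3) * bridgeW := by
  have hode := bridgeGF_ode
  have hode' := congrArg (d⁄dX ℤ) hode
  simp only [Derivation.leibniz, Derivation.leibniz_pow, map_add, map_sub, map_neg, map_zero,
    smul_eq_mul, nsmul_eq_mul, derivative_X, derivative_ofNat] at hode'
  have hdefect : (1 - X) * (1 - 5 * X) * d⁄dX ℤ bridgeW - (5 * X - 3) * bridgeW =
      (-7 + 17 * X + 165 * X ^ 2 - 425 * X ^ 3 + 250 * X ^ 4) * bridgeGF ^ 2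
        + (8 - 86 * X + 248 * X ^ 2 - 20 * X ^ 3 - 400 * X ^ 4 + 250 * X ^ 5) * bridgeGF
          * d⁄dX ℤ bridgeGF - 1 - 5 * X := by
    simp only [bridgeW, Derivation.leibniz, Derivation.leibniz_pow, map_add, map_sub,
      smul_eq_mul, nsmul_eq_mul, derivative_X, derivative_ofNat, Derivation.map_one_eq_zero]
    ring
  rw [← sub_eq_zero, hdefect]
  refine eq_zero_of_ode_of_constantCoeff_eq_zero (A := 4 + 45 * X + 150 * X ^ 2 + 125 * X ^ 3)
    (B := 6 + 15 * X - 75 * X ^ 2) (C := -30 + 75 * X) ?_ ?_ ?_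
  · simp only [Derivation.leibniz, Derivation.leibniz_pow, map_add, map_sub, map_neg, map_zero,
      smul_eq_mul, nsmul_eq_mul, derivative_X, derivative_ofNat, Derivation.map_one_eq_zero,
      Derivation.map_natCast]
    linear_combination (8 + 2 * X - 210 * X ^ 2 - 50 * X ^ 3 + 250 * X ^ 4) * bridgeGF * hode'
      + ((-196 + 110 * X + 200 * X ^ 2 + 750 * X ^ 3) * bridgeGF
        + (24 + 6 * X - 630 * X ^ 2 - 150 * X ^ 3 + 750 * X ^ 4) * d⁄dX ℤ bridgeGF) * hode
  · intro m
    simp only [map_add, map_sub, map_mul, map_pow, map_ofNat constantCoeff, constantCoeff_X,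
      ne_eq, OfNat.ofNat_ne_zero, not_false_eq_true, zero_pow, mul_zero, add_zero, sub_zero]
    omega
  · have hG1 : constantCoeff (d⁄dX ℤ bridgeGF) = 1 := by
      rw [← coeff_zero_eq_constantCoeff_apply, coeff_derivative, coeff_bridgeGF,
        centralPentanomial_initial_values.2.1]
      norm_num
    simp [constantCoeff_bridgeGF, hG1, map_ofNat constantCoeff]

theorem bridgeW_sq : bridgeW ^ 2 = 4 * ((1 - X) * (1 - 5 * X)) := by
  rw [← sub_eq_zero]
  refine eq_zero_of_ode_of_constantCoeff_eq_zero (A := 0) (B := (1 - X) * (1 - 5 * X))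
    (C := 6 - 10 * X) ?_ (by simp) ?_
  · simp only [Derivation.leibniz, Derivation.leibniz_pow, map_sub, smul_eq_mul, nsmul_eq_mul,
      derivative_X, derivative_ofNat, Derivation.map_one_eq_zero]
    linear_combination 2 * bridgeW * bridgeW_ode
  · simp [bridgeW, constantCoeff_bridgeGF, map_ofNat constantCoeff]

theorem bridge_minimalPolynomial :
    (5 * X + 4) * (5 * X - 1) ^ 2 * (X - 1) ^ 2 * bridgeGF ^ 4
      + 2 * (X - 1) * (5 * X - 2) * (5 * X - 1) * bridgeGF ^ 2 + X = 0 := by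
  have h5 : (5 * X + 4 : ℤ⟦X⟧) ≠ 0 := fun h => by
    simpa [map_ofNat constantCoeff] using congrArg constantCoeff h
  have hW := bridgeW_sq
  rw [bridgeW] at hW
  refine (mul_eq_zero.mp ?_).resolve_left h5
  linear_combination hW
end

section
/- Let F(t) ∈ ℤ⟦t⟧ be the power series whose coefficient of t^n is the number of lists of n integers, each belonging to {−1, 0, 2}, all of whose prefix sums are ≥ 0 and whose total sum is 0. Then 1 + (t − 1)F + t³F³ = 0 in ℤ⟦t⟧. -/
open PowerSeries

/-- The generating function for nonnegative excursions with step set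
`{-1, 0, 2}`: the coefficient of `t^n` is the number of lists of `n` integers
from that set, all of whose prefix sums are `≥ 0`, with total sum `0`. -/
noncomputable def excursionGF : PowerSeries ℤ :=
  PowerSeries.mk fun n =>
    (Nat.card {l : List ℤ //
      l.length = n ∧
      (∀ x ∈ l, x ∈ ({-1, 0, 2} : Set ℤ)) ∧
      (∀ i : ℕ, 0 ≤ (l.take i).sum) ∧
      l.sum = 0} : ℤ)

/-!
An excursion is empty, or starts with a flat step followed by an excursion, or starts with the
step `2`. In the last case, cutting at the first visit to level `1` and then at the first visit
to level `0` writes it uniquely as `2 · a · (-1) · b · (-1) · c` with `a`, `b`, `c` excursions,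
because steps go down by at most `1`. Hence `F = 1 + t F + t³ F³`, by the sum and product rules
for generating functions of sized objects.
-/

noncomputable def countingGF {α : Type*} (size : α → ℕ) : PowerSeries ℤ :=
  PowerSeries.mk fun n => Nat.card {a // size a = n}

section countingGF

open Finset

variable {α β : Type*}

theorem coeff_countingGF (size : α → ℕ) (n : ℕ) :
    coeff n (countingGF size) = Nat.card {a // size a = n} :=
  coeff_mk _ _

theorem countingGF_congr {f : α → ℕ} {g : β → ℕ} (e : α ≃ β) (h : ∀ a, g (e a) = f a) :
    countingGF g = countingGF f := by
  ext n
  simp only [coeff_countingGF]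
  exact congrArg _ (Nat.card_congr (e.subtypeEquiv fun a => by rw [h])).symm

theorem countingGF_const_zero [Unique α] : countingGF (fun _ : α => 0) = 1 := by
  ext n
  rw [coeff_countingGF, coeff_one]
  rcases n with _ | n <;> simp

theorem countingGF_add_const (f : α → ℕ) (k : ℕ) :
    countingGF (fun a => f a + k) = X ^ k * countingGF f := by
  ext n
  rw [coeff_countingGF, coeff_X_pow_mul', coeff_countingGF]
  split_ifs with hk
  · exact congrArg _ (Nat.card_congr (Equiv.subtypeEquivRight fun a => by omega))
  · have : IsEmpty {a // f a + k = n} := ⟨fun a => hk (by omega)⟩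
    simp

theorem finite_fiber_add_const {f : α → ℕ} (hf : ∀ n, Finite {a // f a = n}) (k n : ℕ) :
    Finite {a // f a + k = n} :=
  Finite.of_injective (fun a => (⟨a.1, by omega⟩ : {a // f a = n - k}))
    fun _ _ h => Subtype.ext (congrArg Subtype.val h :)

theorem finite_fiber_sumElim {f : α → ℕ} {g : β → ℕ} (hf : ∀ n, Finite {a // f a = n})
    (hg : ∀ n, Finite {b // g b = n}) (n : ℕ) : Finite {x // Sum.elim f g x = n} :=
  have := hf n
  have := hg n
  Finite.of_equiv ({a // f a = n} ⊕ {b // g b = n})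
    (Equiv.subtypeSum (p := fun x => Sum.elim f g x = n)).symm

theorem countingGF_sumElim {f : α → ℕ} {g : β → ℕ} (hf : ∀ n, Finite {a // f a = n})
    (hg : ∀ n, Finite {b // g b = n}) :
    countingGF (Sum.elim f g) = countingGF f + countingGF g := by
  ext n
  have := hf n
  have := hg n
  rw [map_add, coeff_countingGF, coeff_countingGF, coeff_countingGF,
    Nat.card_congr Equiv.subtypeSum]
  exact_mod_cast Nat.card_sum (α := {a // f a = n}) (β := {b // g b = n})

def fiberProdEquiv (f : α → ℕ) (g : β → ℕ) (n : ℕ) :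
    {p : α × β // f p.1 + g p.2 = n} ≃
      Σ q : antidiagonal n, {a // f a = q.1.1} × {b // g b = q.1.2} where
  toFun p := ⟨⟨(f p.1.1, g p.1.2), mem_antidiagonal.2 p.2⟩, ⟨p.1.1, rfl⟩, ⟨p.1.2, rfl⟩⟩
  invFun x := ⟨(x.2.1, x.2.2), by rw [x.2.1.2, x.2.2.2]; exact mem_antidiagonal.1 x.1.2⟩
  left_inv _ := rfl
  right_inv := by
    rintro ⟨⟨⟨i, j⟩, hij⟩, ⟨a, ha⟩, ⟨b, hb⟩⟩
    dsimp only at ha hb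
    subst ha hb
    rfl

theorem finite_fiber_prod {f : α → ℕ} {g : β → ℕ} (hf : ∀ n, Finite {a // f a = n})
    (hg : ∀ n, Finite {b // g b = n}) (n : ℕ) : Finite {p : α × β // f p.1 + g p.2 = n} :=
  Finite.of_equiv _ (fiberProdEquiv f g n).symm

theorem countingGF_prod {f : α → ℕ} {g : β → ℕ} (hf : ∀ n, Finite {a // f a = n})
    (hg : ∀ n, Finite {b // g b = n}) :
    countingGF (fun p : α × β => f p.1 + g p.2) = countingGF f * countingGF g := by
  ext n
  rw [coeff_mul, coeff_countingGF, Nat.card_congr (fiberProdEquiv f g n), Nat.card_sigma,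
    ← sum_coe_sort (antidiagonal n)]
  push_cast
  simp only [Nat.card_prod, coeff_countingGF, Nat.cast_mul]

end countingGF

theorem List.finite_length_eq_of_forall_mem {α : Type*} {S : Set α} [Finite S] (n : ℕ) :
    {l : List α | l.length = n ∧ ∀ x ∈ l, x ∈ S}.Finite :=
  ((List.finite_length_eq S n).image List.unattach).subset fun l ⟨hl, hS⟩ =>
    ⟨l.attachWith _ hS, by simpa using hl, List.unattach_attachWith⟩

def StaysNonneg (h : ℤ) (l : List ℤ) : Prop :=
  ∀ i, 0 ≤ h + (l.take i).sum

section StaysNonneg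

variable {h h' x : ℤ} {l u v : List ℤ}

theorem StaysNonneg.nonneg (H : StaysNonneg h l) : 0 ≤ h := by
  simpa using H 0

theorem StaysNonneg.mono (hh : h ≤ h') (H : StaysNonneg h l) : StaysNonneg h' l :=
  fun i => by linarith [H i]

@[simp]
theorem staysNonneg_nil : StaysNonneg h [] ↔ 0 ≤ h := by
  simp [StaysNonneg]

@[simp]
theorem staysNonneg_cons : StaysNonneg h (x :: l) ↔ 0 ≤ h ∧ StaysNonneg (h + x) l := by
  constructor
  · intro H
    exact ⟨H.nonneg, fun i => by simpa [add_assoc] using H (i + 1)⟩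
  · rintro ⟨h0, H⟩ (_ | i)
    · simpa using h0
    · simpa [add_assoc] using H i

theorem staysNonneg_append :
    StaysNonneg h (u ++ v) ↔ StaysNonneg h u ∧ StaysNonneg (h + u.sum) v := by
  induction u generalizing h with
  | nil => simpa using fun H : StaysNonneg h v => H.nonneg
  | cons x u ih => simp [ih, add_assoc, and_assoc]

/-- First passage: a walk with steps `≥ -1` that starts at `h ≥ 0` and ends below `0` first
leaves `[0, ∞)` by a step `-1` taken at level `0`. -/
theorem exists_eq_append_neg_one_cons (hl : ∀ x ∈ l, -1 ≤ x) (h0 : 0 ≤ h)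
    (hs : h + l.sum < 0) : ∃ a r, l = a ++ -1 :: r ∧ StaysNonneg h a ∧ h + a.sum = 0 := by
  induction l generalizing h with
  | nil => simp at hs; omega
  | cons x l ih =>
    rw [List.forall_mem_cons] at hl
    by_cases hx : h + x < 0
    · have : x = -1 ∧ h = 0 := by omega
      exact ⟨[], l, by rw [this.1]; rfl, staysNonneg_nil.2 h0, by simpa using this.2⟩
    · obtain ⟨a, r, rfl, ha, has⟩ := ih (h := h + x) hl.2 (by omega) (by simp at hs; omega)
      exact ⟨x :: a, r, rfl, staysNonneg_cons.2 ⟨h0, ha⟩, by simp; omega⟩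

theorem not_staysNonneg_append_neg_one_cons (hu : h + u.sum = 0) :
    ¬StaysNonneg h (u ++ -1 :: v) := by
  rw [staysNonneg_append, hu, staysNonneg_cons]
  exact fun ⟨_, _, H⟩ => by linarith [H.nonneg]

theorem eq_of_append_neg_one_cons_eq {a a' r r' : List ℤ} (ha : StaysNonneg h a)
    (has : h + a.sum = 0) (ha' : StaysNonneg h a') (has' : h + a'.sum = 0)
    (heq : a ++ -1 :: r = a' ++ -1 :: r') : a = a' ∧ r = r' := by
  rcases List.append_eq_append_iff.1 heq with ⟨c, rfl, hc⟩ | ⟨c, rfl, hc⟩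
  · cases c with
    | nil => simpa using hc
    | cons y c =>
      obtain ⟨rfl, rfl⟩ := List.cons_eq_cons.1 hc
      exact (not_staysNonneg_append_neg_one_cons has ha').elim
  · cases c with
    | nil => simpa [eq_comm] using hc
    | cons y c =>
      obtain ⟨rfl, rfl⟩ := List.cons_eq_cons.1 hc
      exact (not_staysNonneg_append_neg_one_cons has' ha).elim

end StaysNonneg

def IsExcursionFrom (S : Set ℤ) (h : ℤ) (l : List ℤ) : Prop :=
  (∀ x ∈ l, x ∈ S) ∧ StaysNonneg h l ∧ h + l.sum = 0

abbrev IsExcursion (S : Set ℤ) : List ℤ → Prop :=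
  IsExcursionFrom S 0

section IsExcursionFrom

variable {S : Set ℤ} {h x : ℤ} {l : List ℤ}

theorem isExcursion_nil : IsExcursion S [] := by
  simp [IsExcursionFrom]

theorem isExcursionFrom_cons :
    IsExcursionFrom S h (x :: l) ↔ x ∈ S ∧ 0 ≤ h ∧ IsExcursionFrom S (h + x) l := by
  simp only [IsExcursionFrom, List.forall_mem_cons, staysNonneg_cons, List.sum_cons, add_assoc]
  tauto

theorem isExcursionFrom_add_one (hS : ∀ x ∈ S, -1 ≤ x) (hS₁ : -1 ∈ S) (h0 : 0 ≤ h) :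
    IsExcursionFrom S (h + 1) l ↔
      ∃ a r, IsExcursion S a ∧ IsExcursionFrom S h r ∧ l = a ++ -1 :: r := by
  constructor
  · rintro ⟨hmem, hpos, hsum⟩
    obtain ⟨a, r, rfl, ha, has⟩ :=
      exists_eq_append_neg_one_cons (h := 0) (fun x hx => hS x (hmem x hx)) le_rfl (by omega)
    simp only [List.forall_mem_append, List.forall_mem_cons, staysNonneg_append,
      staysNonneg_cons, List.sum_append, List.sum_cons] at hmem hpos hsum
    refine ⟨a, r, ⟨hmem.1, ha, has⟩, ⟨hmem.2.2, ?_, by omega⟩, rfl⟩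
    simpa [show a.sum = 0 by omega] using hpos.2.2
  · rintro ⟨a, r, ⟨ha, ha', has⟩, ⟨hr, hr', hrs⟩, rfl⟩
    simp only [zero_add] at has
    refine ⟨?_, ?_, by simp [has]; omega⟩
    · simp only [List.forall_mem_append, List.forall_mem_cons]
      exact ⟨ha, hS₁, hr⟩
    · simp only [staysNonneg_append, staysNonneg_cons, has]
      exact ⟨ha'.mono (by omega), by omega, by simpa using hr'⟩

theorem isExcursion_two_cons (hS : ∀ x ∈ S, -1 ≤ x) (hS₁ : -1 ∈ S) (hS₂ : 2 ∈ S) :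
    IsExcursion S (2 :: l) ↔ ∃ a b c, IsExcursion S a ∧ IsExcursion S b ∧ IsExcursion S c ∧
      l = a ++ -1 :: (b ++ -1 :: c) := by
  have from_one : ∀ r, IsExcursionFrom S 1 r ↔
      ∃ b c, IsExcursion S b ∧ IsExcursion S c ∧ r = b ++ -1 :: c := by
    simpa using fun r => isExcursionFrom_add_one (h := 0) (l := r) hS hS₁ le_rfl
  rw [IsExcursion, isExcursionFrom_cons, show (0 : ℤ) + 2 = 1 + 1 by norm_num,
    isExcursionFrom_add_one hS hS₁ zero_le_one]
  simp only [from_one]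
  aesop

end IsExcursionFrom

abbrev Excursion : Type :=
  {l : List ℤ // IsExcursion {-1, 0, 2} l}

namespace Excursion

def length (l : Excursion) : ℕ :=
  l.1.length

theorem neg_one_le_of_mem {x : ℤ} (hx : x ∈ ({-1, 0, 2} : Set ℤ)) : -1 ≤ x := by
  rcases hx with rfl | rfl | rfl <;> norm_num

theorem isExcursion_two_cons {l : List ℤ} :
    IsExcursion {-1, 0, 2} (2 :: l) ↔ ∃ a b c, IsExcursion {-1, 0, 2} a ∧
      IsExcursion {-1, 0, 2} b ∧ IsExcursion {-1, 0, 2} c ∧ l = a ++ -1 :: (b ++ -1 :: c) :=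
  _root_.isExcursion_two_cons (fun _ => neg_one_le_of_mem) (by simp) (by simp)

def assemble : Unit ⊕ (Excursion ⊕ Excursion × Excursion × Excursion) → Excursion
  | .inl _ => ⟨[], isExcursion_nil⟩
  | .inr (.inl l) => ⟨0 :: l.1, isExcursionFrom_cons.2 ⟨by simp, le_rfl, by simpa using l.2⟩⟩
  | .inr (.inr (a, b, c)) =>
    ⟨2 :: (a.1 ++ -1 :: (b.1 ++ -1 :: c.1)), isExcursion_two_cons.2 ⟨a, b, c, a.2, b.2, c.2, rfl⟩⟩

def size : Unit ⊕ (Excursion ⊕ Excursion × Excursion × Excursion) → ℕ :=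
  Sum.elim (fun _ => 0) <| Sum.elim (fun l => l.length + 1)
    fun t => (t.1.length + (t.2.1.length + t.2.2.length)) + 3

theorem length_assemble (x) : (assemble x).length = size x := by
  rcases x with _ | l | ⟨a, b, c⟩ <;> simp [assemble, size, length]; omega

theorem assemble_injective : Function.Injective assemble := by
  have split_unique {a a' r r' : List ℤ} (ha : IsExcursion {-1, 0, 2} a)
      (ha' : IsExcursion {-1, 0, 2} a') (h : a ++ -1 :: r = a' ++ -1 :: r') : a = a' ∧ r = r' :=
    eq_of_append_neg_one_cons_eq ha.2.1 ha.2.2 ha'.2.1 ha'.2.2 h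
  rintro (_ | l | ⟨a, b, c⟩) (_ | l' | ⟨a', b', c'⟩) h <;> simp [assemble] at h ⊢
  · exact Subtype.ext h
  · obtain ⟨ha, h⟩ := split_unique a.2 a'.2 h
    obtain ⟨hb, hc⟩ := split_unique b.2 b'.2 h
    exact ⟨Subtype.ext ha, Subtype.ext hb, Subtype.ext hc⟩

theorem assemble_surjective : Function.Surjective assemble := by
  rintro ⟨_ | ⟨x, r⟩, hl⟩
  · exact ⟨.inl (), rfl⟩
  obtain ⟨hx, -, hr⟩ := isExcursionFrom_cons.1 hl
  have : 0 ≤ x := by simpa using hr.2.1.nonneg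
  obtain rfl | rfl : x = 0 ∨ x = 2 := by
    simp only [Set.mem_insert_iff, Set.mem_singleton_iff] at hx
    omega
  · exact ⟨.inr (.inl ⟨r, by simpa using hr⟩), rfl⟩
  · obtain ⟨a, b, c, ha, hb, hc, rfl⟩ := isExcursion_two_cons.1 hl
    exact ⟨.inr (.inr (⟨a, ha⟩, ⟨b, hb⟩, ⟨c, hc⟩)), rfl⟩

theorem finite_length_eq (n : ℕ) : Finite {l : Excursion // l.length = n} :=
  have := (List.finite_length_eq_of_forall_mem (S := ({-1, 0, 2} : Set ℤ)) n).to_subtype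
  Finite.of_injective (fun l => (⟨l.1.1, l.2, l.1.2.1⟩ :
      {l : List ℤ | l.length = n ∧ ∀ x ∈ l, x ∈ ({-1, 0, 2} : Set ℤ)}))
    fun _ _ h => Subtype.ext (Subtype.ext (congrArg Subtype.val h :))

theorem excursionGF_eq_countingGF_length : excursionGF = countingGF length := by
  ext n
  rw [excursionGF, coeff_mk, coeff_countingGF]
  refine congrArg _ (Nat.card_congr ((Equiv.subtypeSubtypeEquivSubtypeInter
    (IsExcursion {-1, 0, 2}) (·.length = n)).trans
    (Equiv.subtypeEquivRight fun l => ?_)).symm)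
  simp only [IsExcursionFrom, StaysNonneg, zero_add]
  tauto

theorem countingGF_length :
    countingGF length = 1 + X * countingGF length + X ^ 3 * countingGF length ^ 3 := by
  calc countingGF length = countingGF size :=
        countingGF_congr (Equiv.ofBijective assemble ⟨assemble_injective, assemble_surjective⟩)
          length_assemble
    _ = _ := by
      have h₁ := finite_length_eq
      have h₂ := finite_fiber_prod h₁ h₁
      have h₃ := finite_fiber_prod h₁ h₂
      have h₁' := finite_fiber_add_const h₁ 1
      have h₃' := finite_fiber_add_const h₃ 3
      rw [size, countingGF_sumElim (fun _ => inferInstance) (finite_fiber_sumElim h₁' h₃'),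
        countingGF_sumElim h₁' h₃', countingGF_const_zero, countingGF_add_const,
        countingGF_add_const, countingGF_prod h₁ h₂, countingGF_prod h₁ h₁]
      ring

end Excursion

theorem excursion_minimalPolynomial :
    1 + (X - 1) * excursionGF + X ^ 3 * excursionGF ^ 3 = 0 := by
  rw [Excursion.excursionGF_eq_countingGF_length]
  linear_combination -Excursion.countingGF_length
end
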